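/- arXiv:1611.09926 — 3 statements merged into one kernel-verified Lean document; each statement's English description precedes it below -/
import Mathlib

section
/- The pairwise interaction index expressed in Möbius coordinates: I_ν(i,j) = Σ_{T ⊆ N∖{i,j}} ξ_{|T|}^2 [ν(T∪{i,j}) − ν(T∪{i}) − ν(T∪{j}) + ν(T)] equals Σ_{T ⊆ N∖{i,j}} m(T∪{i,j})/(|T|+1), where ξ_k^2 = (|N|−k−2)! k! / (|N|−1)! and m is the Möbius transform of ν. -/
open scoped Classical

lemma key_sum (m : ℕ) : ∀ a : ℕ,
    ∑ k ∈ Finset.range (m + 1), (-1 : ℝ) ^ k * (m.choose k : ℝ) / ((k : ℝ) + (a : ℝ) + 1)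
      = (m.factorial : ℝ) * (a.factorial : ℝ) / ((m + a + 1).factorial : ℝ) := by
  induction m with
  | zero =>
    intro a
    have : ((a : ℕ) + 1).factorial = (a + 1) * a.factorial := Nat.factorial_succ a
    simp [this]
    rw [eq_div_iff (by positivity)]
    push_cast
    field_simp
  | succ m ih =>
    intro a
    have hg : ∑ k ∈ Finset.range (m + 1),
          (-1 : ℝ) ^ (k + 1) * (m.choose (k + 1) : ℝ) / (((k : ℝ) + 1) + (a : ℝ) + 1)
        = (∑ k ∈ Finset.range (m + 1),
            (-1 : ℝ) ^ k * (m.choose k : ℝ) / ((k : ℝ) + (a : ℝ) + 1)) - 1 / ((a : ℝ) + 1) := by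
      have h := Finset.sum_range_succ' (fun k =>
        (-1 : ℝ) ^ k * (m.choose k : ℝ) / ((k : ℝ) + (a : ℝ) + 1)) (m + 1)
      rw [Finset.sum_range_succ (fun k =>
        (-1 : ℝ) ^ k * (m.choose k : ℝ) / ((k : ℝ) + (a : ℝ) + 1)) (m + 1)] at h
      simp only [Nat.choose_succ_self, Nat.cast_zero, mul_zero, zero_div, add_zero,
        pow_zero, one_mul, Nat.choose_zero_right, Nat.cast_one, mul_one, zero_add] at h
      rw [show (∑ k ∈ Finset.range (m + 1),
          (-1 : ℝ) ^ (k + 1) * (m.choose (k + 1) : ℝ) / (((k : ℝ) + 1) + (a : ℝ) + 1))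
        = ∑ k ∈ Finset.range (m + 1),
          (-1 : ℝ) ^ (k + 1) * (m.choose (k + 1) : ℝ) / (((k + 1 : ℕ) : ℝ) + (a : ℝ) + 1) from
          Finset.sum_congr rfl fun k _ => by push_cast; ring_nf]
      linarith [h]
    have hsplit : ∑ k ∈ Finset.range (m + 1 + 1),
          (-1 : ℝ) ^ k * ((m + 1).choose k : ℝ) / ((k : ℝ) + (a : ℝ) + 1)
        = (∑ k ∈ Finset.range (m + 1),
            (-1 : ℝ) ^ k * (m.choose k : ℝ) / ((k : ℝ) + (a : ℝ) + 1))
          - ∑ k ∈ Finset.range (m + 1),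
            (-1 : ℝ) ^ k * (m.choose k : ℝ) / ((k : ℝ) + ((a + 1 : ℕ) : ℝ) + 1) := by
      rw [Finset.sum_range_succ' (fun k =>
        (-1 : ℝ) ^ k * ((m + 1).choose k : ℝ) / ((k : ℝ) + (a : ℝ) + 1)) (m + 1)]
      have e1 : ∀ k ∈ Finset.range (m + 1),
          (-1 : ℝ) ^ (k + 1) * ((m + 1).choose (k + 1) : ℝ) / (((k + 1 : ℕ) : ℝ) + (a : ℝ) + 1)
          = -((-1 : ℝ) ^ k * (m.choose k : ℝ) / ((k : ℝ) + ((a + 1 : ℕ) : ℝ) + 1))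
            + (-1 : ℝ) ^ (k + 1) * (m.choose (k + 1) : ℝ) / (((k : ℝ) + 1) + (a : ℝ) + 1) := by
        intro k _
        rw [Nat.choose_succ_succ]
        push_cast
        ring
      rw [Finset.sum_congr rfl e1, Finset.sum_add_distrib, Finset.sum_neg_distrib, hg]
      simp only [Nat.choose_zero_right, Nat.cast_one, mul_one, Nat.cast_zero, zero_add, pow_zero,
        one_mul]
      ring
    rw [hsplit, ih a, ih (a + 1)]
    have hfac1 : ((m + 1 + a + 1).factorial : ℝ) = ((m + a + 1) + 1 : ℕ) * (m + a + 1).factorial := by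
      rw [show m + 1 + a + 1 = (m + a + 1) + 1 by ring, Nat.factorial_succ]; push_cast; ring
    have hfac2 : ((m + (a + 1) + 1).factorial : ℝ) = ((m + a + 1) + 1 : ℕ) * (m + a + 1).factorial := by
      rw [show m + (a + 1) + 1 = (m + a + 1) + 1 by ring, Nat.factorial_succ]; push_cast; ring
    rw [hfac1, hfac2, Nat.factorial_succ (a), Nat.factorial_succ (m)]
    have h1 : ((m + a + 1).factorial : ℝ) ≠ 0 := Nat.cast_ne_zero.2 (Nat.factorial_ne_zero _)
    have h2 : (((m + a + 1) + 1 : ℕ) : ℝ) ≠ 0 := Nat.cast_ne_zero.2 (Nat.succ_ne_zero _)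
    field_simp
    push_cast
    ring


noncomputable def mobius {ι : Type*} [DecidableEq ι] (ν : Finset ι → ℝ) (A : Finset ι) : ℝ :=
  ∑ B ∈ A.powerset, (-1 : ℝ) ^ (A.card - B.card) * ν B

theorem interaction_index_mobius_form {ι : Type*} [Fintype ι] [DecidableEq ι]
    (hcard : 2 ≤ Fintype.card ι) (ν : Finset ι → ℝ) (h0 : ν ∅ = 0)
    (i j : ι) (hij : i ≠ j) :
    (∑ T ∈ (Finset.univ \ {i, j} : Finset ι).powerset,
        (((Fintype.card ι - T.card - 2).factorial * T.card.factorial : ℕ) : ℝ)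
          / (((Fintype.card ι - 1).factorial : ℕ) : ℝ) *
          (ν (T ∪ {i, j}) - ν (insert i T) - ν (insert j T) + ν T)) =
      ∑ T ∈ (Finset.univ \ {i, j} : Finset ι).powerset,
        mobius ν (T ∪ {i, j}) / ((T.card : ℝ) + 1) := by
  classical
  set n := Fintype.card ι with hn
  set S : Finset ι := Finset.univ \ {i, j} with hS
  have hiS : i ∉ S := by simp [hS]
  have hjS : j ∉ S := by simp [hS]
  have hScard : S.card = n - 2 := by
    rw [hS, Finset.card_sdiff_of_subset (Finset.subset_univ _), Finset.card_univ]
    congr 1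
    rw [Finset.card_insert_of_notMem (by simp [hij]), Finset.card_singleton]
  have hunion : ∀ C : Finset ι, C ∪ {i, j} = insert i (insert j C) := by
    intro C; ext x; simp
  -- Step 1: Möbius expansion
  have hmob : ∀ T ∈ S.powerset, mobius ν (T ∪ {i, j})
      = ∑ C ∈ T.powerset, (-1 : ℝ) ^ (T.card - C.card) *
          (ν (C ∪ {i, j}) - ν (insert i C) - ν (insert j C) + ν C) := by
    intro T hT
    rw [Finset.mem_powerset] at hT
    have hiT : i ∉ T := fun h => hiS (hT h)
    have hjT : j ∉ T := fun h => hjS (hT h)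
    have hij' : i ∉ insert j T := by simp [hij, hiT]
    have hNcard : (T ∪ {i, j}).card = T.card + 2 := by
      rw [hunion, Finset.card_insert_of_notMem hij',
        Finset.card_insert_of_notMem hjT]
    unfold mobius
    rw [hNcard, hunion, Finset.sum_powerset_insert hij',
      Finset.sum_powerset_insert hjT, Finset.sum_powerset_insert hjT,
      ← Finset.sum_add_distrib, ← Finset.sum_add_distrib, ← Finset.sum_add_distrib]
    refine Finset.sum_congr rfl fun C hC => ?_
    rw [Finset.mem_powerset] at hC
    have hcle : C.card ≤ T.card := Finset.card_le_card hC
    have hiC : i ∉ C := fun h => hiT (hC h)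
    have hjC : j ∉ C := fun h => hjT (hC h)
    have hijC : i ∉ insert j C := by simp [hij, hiC]
    have c1 : (insert j C).card = C.card + 1 := Finset.card_insert_of_notMem hjC
    have c2 : (insert i C).card = C.card + 1 := Finset.card_insert_of_notMem hiC
    have c3 : (insert i (insert j C)).card = C.card + 2 := by
      rw [Finset.card_insert_of_notMem hijC, c1]
    rw [hunion C, c1, c2, c3,
      show T.card + 2 - C.card = (T.card - C.card) + 2 by omega,
      show T.card + 2 - (C.card + 1) = (T.card - C.card) + 1 by omega,
      show T.card + 2 - (C.card + 2) = T.card - C.card by omega]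
    simp only [pow_add, pow_one]
    ring
  -- Step 2: rewrite RHS, swap sums
  have hrhs : ∑ T ∈ S.powerset, mobius ν (T ∪ {i, j}) / ((T.card : ℝ) + 1)
      = ∑ C ∈ S.powerset,
          (ν (C ∪ {i, j}) - ν (insert i C) - ν (insert j C) + ν C) *
          ∑ T ∈ S.powerset.filter (fun T => C ⊆ T),
            (-1 : ℝ) ^ (T.card - C.card) / ((T.card : ℝ) + 1) := by
    rw [Finset.sum_congr rfl fun T hT => by
      rw [hmob T hT, Finset.sum_div]]
    rw [Finset.sum_comm' (s := S.powerset) (t := fun T => T.powerset)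
      (t' := S.powerset) (s' := fun C => S.powerset.filter (fun T => C ⊆ T))
      (by
        intro T C
        simp only [Finset.mem_powerset, Finset.mem_filter]
        constructor
        · rintro ⟨h1, h2⟩; exact ⟨⟨h1, h2⟩, h2.trans h1⟩
        · rintro ⟨⟨h1, h2⟩, h3⟩; exact ⟨h1, h2⟩)]
    refine Finset.sum_congr rfl fun C hC => ?_
    rw [Finset.mul_sum]
    refine Finset.sum_congr rfl fun T hT => ?_
    ring
  rw [hrhs]
  -- Step 3: evaluate inner sum
  refine Finset.sum_congr rfl fun C hC => ?_
  rw [Finset.mem_powerset] at hC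
  have hcle : C.card ≤ n - 2 := hScard ▸ Finset.card_le_card hC
  have hinner : ∑ T ∈ S.powerset.filter (fun T => C ⊆ T),
        (-1 : ℝ) ^ (T.card - C.card) / ((T.card : ℝ) + 1)
      = ∑ U ∈ (S \ C).powerset, (-1 : ℝ) ^ U.card / ((C.card : ℝ) + (U.card : ℝ) + 1) := by
    refine Finset.sum_nbij' (fun T => T \ C) (fun U => C ∪ U) ?_ ?_ ?_ ?_ ?_
    · intro T hT
      rw [Finset.mem_filter, Finset.mem_powerset] at hT
      rw [Finset.mem_powerset]
      exact Finset.sdiff_subset_sdiff hT.1 le_rfl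
    · intro U hU
      rw [Finset.mem_powerset] at hU
      rw [Finset.mem_filter, Finset.mem_powerset]
      exact ⟨Finset.union_subset hC (hU.trans (Finset.sdiff_subset)), Finset.subset_union_left⟩
    · intro T hT
      rw [Finset.mem_filter] at hT
      show C ∪ (T \ C) = T
      exact Finset.union_sdiff_of_subset hT.2
    · intro U hU
      rw [Finset.mem_powerset] at hU
      have hd : Disjoint C U := Finset.disjoint_left.2 fun x hxC hxU =>
        (Finset.mem_sdiff.1 (hU hxU)).2 hxC
      show (C ∪ U) \ C = U
      exact Finset.union_sdiff_cancel_left hd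
    · intro T hT
      rw [Finset.mem_filter] at hT
      have h1 : (T \ C).card = T.card - C.card := Finset.card_sdiff_of_subset hT.2
      have h2 : ((T.card : ℕ) : ℝ) = (C.card : ℝ) + ((T.card - C.card : ℕ) : ℝ) := by
        rw [← Nat.cast_add]
        congr 1
        have := Finset.card_le_card hT.2
        omega
      show (-1 : ℝ) ^ (T.card - C.card) / ((T.card : ℝ) + 1)
          = (-1 : ℝ) ^ ((T \ C).card) / ((C.card : ℝ) + ((T \ C).card : ℝ) + 1)
      rw [h1, h2]
  rw [hinner]
  have hgrp : ∑ U ∈ (S \ C).powerset, (-1 : ℝ) ^ U.card / ((C.card : ℝ) + (U.card : ℝ) + 1)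
      = ∑ k ∈ Finset.range ((S \ C).card + 1),
          ((S \ C).card.choose k) • ((-1 : ℝ) ^ k / ((C.card : ℝ) + (k : ℝ) + 1)) :=
    Finset.sum_powerset_apply_card (fun k => (-1 : ℝ) ^ k / ((C.card : ℝ) + (k : ℝ) + 1))
  have hsdc : (S \ C).card = n - 2 - C.card := by
    rw [Finset.card_sdiff_of_subset hC, hScard]
  rw [hgrp, hsdc]
  have : ∑ k ∈ Finset.range ((n - 2 - C.card) + 1),
        ((n - 2 - C.card).choose k) • ((-1 : ℝ) ^ k / ((C.card : ℝ) + (k : ℝ) + 1))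
      = ∑ k ∈ Finset.range ((n - 2 - C.card) + 1),
        (-1 : ℝ) ^ k * ((n - 2 - C.card).choose k : ℝ) / ((k : ℝ) + (C.card : ℝ) + 1) := by
    refine Finset.sum_congr rfl fun k _ => ?_
    rw [nsmul_eq_mul]
    ring
  rw [this, key_sum (n - 2 - C.card) C.card]
  have hidx : (n - 2 - C.card) + C.card + 1 = n - 1 := by omega
  have hidx2 : n - C.card - 2 = n - 2 - C.card := by omega
  rw [hidx, hidx2]
  push_cast
  ring
end

section
/- A capacity ν on a finite set N is convex (supermodular: ν(A∪B) + ν(A∩B) ≥ ν(A) + ν(B) for all A,B) if and only if for every pair i ≠ j in N and every A ⊆ N containing i and j, Σ_{{i,j} ⊆ B ⊆ A} m(B) ≥ 0, where m is the Möbius transform of ν. -/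
open scoped Classical

lemma sum_mobius {ι : Type*} [DecidableEq ι] (ν : Finset ι → ℝ) (A : Finset ι) :
    ∑ B ∈ A.powerset, mobius ν B = ν A := by
  unfold mobius
  rw [Finset.sum_comm' (s' := fun C => A.powerset.filter (fun B => C ⊆ B))
      (t' := A.powerset) (fun B C => by
        simp only [Finset.mem_powerset, Finset.mem_filter]
        constructor
        · rintro ⟨hBA, hCB⟩; exact ⟨⟨hBA, hCB⟩, hCB.trans hBA⟩
        · rintro ⟨⟨hBA, hCB⟩, _⟩; exact ⟨hBA, hCB⟩)]
  have h1 : ∀ C ∈ A.powerset,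
      (∑ B ∈ A.powerset.filter (fun B => C ⊆ B), (-1 : ℝ) ^ (B.card - C.card) * ν C)
        = (if C = A then 1 else 0) * ν C := by
    intro C hC
    rw [Finset.mem_powerset] at hC
    rw [← Finset.sum_mul]
    congr 1
    have hbij : ∑ B ∈ A.powerset.filter (fun B => C ⊆ B), (-1 : ℝ) ^ (B.card - C.card)
        = ∑ D ∈ (A \ C).powerset, (-1 : ℝ) ^ D.card := by
      apply Finset.sum_nbij' (i := fun B => B \ C) (j := fun D => D ∪ C)
      · intro B hB
        simp only [Finset.mem_filter, Finset.mem_powerset] at hB ⊢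
        exact Finset.sdiff_subset_sdiff hB.1 le_rfl
      · intro D hD
        simp only [Finset.mem_filter, Finset.mem_powerset] at hD ⊢
        constructor
        · exact Finset.union_subset (hD.trans Finset.sdiff_subset) hC
        · exact Finset.subset_union_right
      · intro B hB
        simp only [Finset.mem_filter, Finset.mem_powerset] at hB
        exact Finset.sdiff_union_of_subset hB.2
      · intro D hD
        simp only [Finset.mem_powerset] at hD
        rw [Finset.union_sdiff_right]
        exact Finset.sdiff_eq_self_of_disjoint (Finset.disjoint_of_subset_left hD Finset.sdiff_disjoint)
      · intro B hB
        simp only [Finset.mem_filter, Finset.mem_powerset] at hB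
        rw [Finset.card_sdiff_of_subset hB.2]
    rw [hbij]
    have := @Finset.sum_powerset_neg_one_pow_card ι _ (A \ C)
    have h2 : ((∑ m ∈ (A \ C).powerset, (-1 : ℤ) ^ m.card : ℤ) : ℝ)
        = ∑ D ∈ (A \ C).powerset, (-1 : ℝ) ^ D.card := by push_cast; ring_nf
    rw [← h2, this]
    by_cases h : A \ C = ∅
    · have : C = A := Finset.Subset.antisymm hC (by
        intro x hx
        by_contra hxc
        exact (Finset.eq_empty_iff_forall_notMem.1 h x) (Finset.mem_sdiff.2 ⟨hx, hxc⟩))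
      simp [h, this]
    · have : C ≠ A := fun hCA => h (by simp [hCA])
      simp [h, this]
  rw [Finset.sum_congr rfl h1]
  simp [Finset.sum_ite_eq' A.powerset A]

lemma sum_mobius_mem {ι : Type*} [DecidableEq ι] (ν : Finset ι → ℝ) {A : Finset ι} {i : ι}
    (hi : i ∈ A) :
    ∑ B ∈ A.powerset.filter (fun B => i ∈ B), mobius ν B = ν A - ν (A.erase i) := by
  have hsplit := Finset.sum_filter_add_sum_filter_not A.powerset (fun B => i ∈ B) (mobius ν)
  have hnot : A.powerset.filter (fun B => ¬ i ∈ B) = (A.erase i).powerset := by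
    ext B
    simp [Finset.subset_erase, and_comm]
  rw [hnot, sum_mobius, sum_mobius] at hsplit
  linarith

lemma key_identity {ι : Type*} [DecidableEq ι] (ν : Finset ι → ℝ) {A : Finset ι} {i j : ι}
    (hi : i ∈ A) (hj : j ∈ A) (hij : i ≠ j) :
    ∑ B ∈ A.powerset.filter (fun B => i ∈ B ∧ j ∈ B), mobius ν B
      = ν A - ν (A.erase i) - (ν (A.erase j) - ν ((A.erase j).erase i)) := by
  have hsplit := Finset.sum_filter_add_sum_filter_not (A.powerset.filter (fun B => i ∈ B))
    (fun B => j ∈ B) (mobius ν)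
  rw [Finset.filter_filter, Finset.filter_filter] at hsplit
  have hnot : A.powerset.filter (fun B => i ∈ B ∧ ¬ j ∈ B)
      = (A.erase j).powerset.filter (fun B => i ∈ B) := by
    ext B
    simp only [Finset.mem_filter, Finset.mem_powerset, Finset.subset_erase]
    tauto
  rw [hnot, sum_mobius_mem ν hi, sum_mobius_mem ν (Finset.mem_erase.2 ⟨hij, hi⟩)] at hsplit
  linarith

theorem convex_iff_mobius_pairwise_sums_nonneg {ι : Type*} [Fintype ι] [DecidableEq ι]
    (ν : Finset ι → ℝ) (h0 : ν ∅ = 0)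
    (hmono : ∀ A B : Finset ι, A ⊆ B → ν A ≤ ν B) :
    (∀ A B : Finset ι, ν A + ν B ≤ ν (A ∪ B) + ν (A ∩ B)) ↔
      ∀ i j : ι, i ≠ j → ∀ A : Finset ι, i ∈ A → j ∈ A →
        0 ≤ ∑ B ∈ A.powerset.filter (fun B => i ∈ B ∧ j ∈ B), mobius ν B := by
  constructor
  · intro hsup i j hij A hi hj
    rw [key_identity ν hi hj hij]
    have h1 := hsup (A.erase i) (A.erase j)
    have hu : A.erase i ∪ A.erase j = A := by
      ext x
      simp only [Finset.mem_union, Finset.mem_erase]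
      constructor
      · rintro (⟨_, h⟩ | ⟨_, h⟩) <;> exact h
      · intro hx
        by_cases hxi : x = i
        · exact Or.inr ⟨by simp [hxi, hij], hx⟩
        · exact Or.inl ⟨hxi, hx⟩
    have hint : A.erase i ∩ A.erase j = (A.erase j).erase i := by
      ext x
      simp only [Finset.mem_inter, Finset.mem_erase]
      tauto
    rw [hu, hint] at h1
    linarith
  · intro h
    -- pair inequality
    have claimA : ∀ (S : Finset ι) (i j : ι), i ∉ S → j ∉ S → i ≠ j →
        ν (insert i S) + ν (insert j S) ≤ ν (insert i (insert j S)) + ν S := by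
      intro S i j hiS hjS hij
      have hi : i ∈ insert i (insert j S) := Finset.mem_insert_self _ _
      have hj : j ∈ insert i (insert j S) := Finset.mem_insert_of_mem (Finset.mem_insert_self _ _)
      have hk := h i j hij (insert i (insert j S)) hi hj
      rw [key_identity ν hi hj hij] at hk
      have e1 : (insert i (insert j S)).erase i = insert j S := by
        rw [Finset.erase_insert (by simp [hij, hiS])]
      have e2 : (insert i (insert j S)).erase j = insert i S := by
        rw [Finset.erase_insert_of_ne hij, Finset.erase_insert hjS]
      have e3 : (insert i S).erase i = S := Finset.erase_insert hiS
      rw [e1, e2, e3] at hk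
      linarith
    -- monotone differences
    have claimB : ∀ (n : ℕ) (S T : Finset ι) (i : ι), (T \ S).card = n → S ⊆ T → i ∉ T →
        ν (insert i S) + ν T ≤ ν (insert i T) + ν S := by
      intro n
      induction n with
      | zero =>
        intro S T i hcard hST hiT
        have : T = S := Finset.Subset.antisymm
          (fun x hx => by
            by_contra hxS
            exact absurd (Finset.card_eq_zero.1 hcard ▸ Finset.mem_sdiff.2 ⟨hx, hxS⟩)
              (by simp)) hST
        rw [this]
      | succ n ih =>
        intro S T i hcard hST hiT
        obtain ⟨j, hj⟩ : (T \ S).Nonempty := Finset.card_pos.1 (by omega)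
        rw [Finset.mem_sdiff] at hj
        have hij : i ≠ j := fun hh => hiT (hh ▸ hj.1)
        have hiS : i ∉ S := fun hh => hiT (hST hh)
        have h1 := claimA S i j hiS hj.2 hij
        have hcard' : (T \ insert j S).card = n := by
          rw [Finset.sdiff_insert]
          rw [Finset.card_erase_of_mem (Finset.mem_sdiff.2 hj), hcard]
          omega
        have h2 := ih (insert j S) T i hcard' (Finset.insert_subset hj.1 hST) hiT
        linarith
    intro A B
    -- supermodularity by induction on (A \ B).card
    suffices hgen : ∀ (n : ℕ) (A B : Finset ι), (A \ B).card = n →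
        ν A + ν B ≤ ν (A ∪ B) + ν (A ∩ B) from hgen _ A B rfl
    intro n
    induction n with
    | zero =>
      intro A B hcard
      have hAB : A ⊆ B := by
        intro x hx
        by_contra hxB
        exact absurd (Finset.card_eq_zero.1 hcard ▸ Finset.mem_sdiff.2 ⟨hx, hxB⟩) (by simp)
      rw [Finset.union_eq_right.2 hAB, Finset.inter_eq_left.2 hAB]
      linarith
    | succ n ih =>
      intro A B hcard
      obtain ⟨i, hi⟩ : (A \ B).Nonempty := Finset.card_pos.1 (by omega)
      rw [Finset.mem_sdiff] at hi
      set A' := A.erase i with hA'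
      have hiA' : i ∉ A' ∪ B := by simp [hA', hi.2]
      have h1 := claimB ((A' ∪ B) \ A').card A' (A' ∪ B) i rfl Finset.subset_union_left hiA'
      have e1 : insert i A' = A := Finset.insert_erase hi.1
      have e2 : insert i (A' ∪ B) = A ∪ B := by
        rw [← Finset.insert_union, e1]
      have hcard' : (A' \ B).card = n := by
        rw [hA', Finset.erase_sdiff_comm, Finset.card_erase_of_mem (Finset.mem_sdiff.2 hi), hcard]
        omega
      have h2 := ih A' B hcard'
      have e3 : A' ∩ B = A ∩ B := by
        ext x
        simp only [hA', Finset.mem_inter, Finset.mem_erase]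
        constructor
        · rintro ⟨⟨_, h⟩, h'⟩; exact ⟨h, h'⟩
        · rintro ⟨h, h'⟩; exact ⟨⟨fun e => hi.2 (e ▸ h'), h⟩, h'⟩
      rw [e1, e2] at h1
      rw [e3] at h2
      linarith
end

section
/- For a convex (supermodular) capacity ν and any nonnegative vectors, the function A ↦ Σ_{{i,j} ⊆ B ⊆ A} m(B) being nonnegative for all A implies: for reals d ≥ c ≥ 0 and any nonnegative z_k (k ∈ N∖{i,j}), Σ_{A ∋ i,j} m(A) (min(d, min_{k∈A∖{i,j}} z_k) − min(c, min_{k∈A∖{i,j}} z_k)) ≥ 0. -/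
open scoped Classical

open Finset in
private lemma mdn_base {ι : Type*} [Fintype ι] [DecidableEq ι]
    (ν : Finset ι → ℝ) (i j : ι)
    (hcrit : ∀ A : Finset ι, i ∈ A → j ∈ A →
      0 ≤ ∑ B ∈ A.powerset.filter (fun B => i ∈ B ∧ j ∈ B), mobius ν B)
    (c d : ℝ) (hcd : c ≤ d) (z : ι → ℝ)
    (hempty : ∀ k, z k < d → z k ≤ c) :
    0 ≤ ∑ A ∈ (Finset.univ : Finset (Finset ι)).filter (fun A => i ∈ A ∧ j ∈ A),
        mobius ν A *
          ((A \ {i, j}).fold min d z - (A \ {i, j}).fold min c z) := by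
  set S : Finset ι := (univ.filter fun k => d ≤ z k) ∪ {i, j} with hS
  have hiS : i ∈ S := by simp [hS]
  have hjS : j ∈ S := by simp [hS]
  have hterm : ∀ A ∈ (univ : Finset (Finset ι)).filter (fun A => i ∈ A ∧ j ∈ A),
      mobius ν A * ((A \ {i, j}).fold min d z - (A \ {i, j}).fold min c z)
        = if A ⊆ S then (d - c) * mobius ν A else 0 := by
    intro A _
    by_cases hsub : A ⊆ S
    · have hbig : ∀ k ∈ A \ ({i, j} : Finset ι), d ≤ z k := by
        intro k hk
        rcases mem_sdiff.mp hk with ⟨hkA, hknot⟩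
        have := hsub hkA
        rcases mem_union.mp this with h | h
        · exact (mem_filter.mp h).2
        · exact absurd h hknot
      have h1 : (A \ ({i, j} : Finset ι)).fold min d z = d :=
        le_antisymm ((fold_min_le _).mpr (Or.inl le_rfl))
          ((le_fold_min _).mpr ⟨le_rfl, hbig⟩)
      have h2 : (A \ ({i, j} : Finset ι)).fold min c z = c :=
        le_antisymm ((fold_min_le _).mpr (Or.inl le_rfl))
          ((le_fold_min _).mpr ⟨le_rfl, fun k hk => le_trans hcd (hbig k hk)⟩)
      rw [h1, h2, if_pos hsub]; ring
    · obtain ⟨k, hkA, hkS⟩ := not_subset.mp hsub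
      have hknot : k ∉ ({i, j} : Finset ι) := fun h => hkS (mem_union_right _ h)
      have hkmem : k ∈ A \ ({i, j} : Finset ι) := mem_sdiff.mpr ⟨hkA, hknot⟩
      have hzk : z k ≤ c := by
        apply hempty
        by_contra h
        exact hkS (mem_union_left _ (mem_filter.mpr ⟨mem_univ _, not_lt.mp h⟩))
      have h1 : (A \ ({i, j} : Finset ι)).fold min d z
          = (A \ ({i, j} : Finset ι)).fold min c z := by
        apply le_antisymm
        · apply (le_fold_min _).mpr
          constructor
          · exact (fold_min_le _).mpr (Or.inr ⟨k, hkmem, hzk⟩)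
          · intro x hx
            exact (fold_min_le _).mpr (Or.inr ⟨x, hx, le_rfl⟩)
        · apply (le_fold_min _).mpr
          constructor
          · exact (fold_min_le _).mpr (Or.inl hcd)
          · intro x hx
            exact (fold_min_le _).mpr (Or.inr ⟨x, hx, le_rfl⟩)
      rw [h1, if_neg hsub]; ring
  rw [Finset.sum_congr rfl hterm, ← Finset.sum_filter]
  have hset : ((univ : Finset (Finset ι)).filter (fun A => i ∈ A ∧ j ∈ A)).filter
      (fun A => A ⊆ S) = S.powerset.filter (fun B => i ∈ B ∧ j ∈ B) := by
    ext A
    simp only [mem_filter, mem_powerset, mem_univ, true_and]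
    tauto
  rw [hset, ← Finset.mul_sum]
  exact mul_nonneg (by linarith) (hcrit S hiS hjS)

open Finset in
private lemma mdn_aux {ι : Type*} [Fintype ι] [DecidableEq ι]
    (ν : Finset ι → ℝ) (i j : ι)
    (hcrit : ∀ A : Finset ι, i ∈ A → j ∈ A →
      0 ≤ ∑ B ∈ A.powerset.filter (fun B => i ∈ B ∧ j ∈ B), mobius ν B)
    (z : ι → ℝ) :
    ∀ n : ℕ, ∀ c d : ℝ, c ≤ d →
      ((univ : Finset ι).filter fun k => c < z k ∧ z k < d).card ≤ n →
      0 ≤ ∑ A ∈ (Finset.univ : Finset (Finset ι)).filter (fun A => i ∈ A ∧ j ∈ A),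
        mobius ν A *
          ((A \ {i, j}).fold min d z - (A \ {i, j}).fold min c z) := by
  intro n
  induction n with
  | zero =>
    intro c d hcd hcard
    apply mdn_base ν i j hcrit c d hcd z
    intro k hk
    by_contra h
    have : k ∈ (univ : Finset ι).filter fun k => c < z k ∧ z k < d :=
      mem_filter.mpr ⟨mem_univ _, not_le.mp h, hk⟩
    have := card_pos.mpr ⟨k, this⟩
    omega
  | succ n ih =>
    intro c d hcd hcard
    by_cases hex : ∃ k, c < z k ∧ z k < d
    · obtain ⟨k0, hk0c, hk0d⟩ := hex
      set t := z k0 with ht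
      have hct : c ≤ t := le_of_lt hk0c
      have htd : t ≤ d := le_of_lt hk0d
      have hk0mem : k0 ∈ (univ : Finset ι).filter fun k => c < z k ∧ z k < d :=
        mem_filter.mpr ⟨mem_univ _, hk0c, hk0d⟩
      have hcard1 : ((univ : Finset ι).filter fun k => c < z k ∧ z k < t).card ≤ n := by
        have hsub : ((univ : Finset ι).filter fun k => c < z k ∧ z k < t) ⊆
            ((univ : Finset ι).filter fun k => c < z k ∧ z k < d).erase k0 := by
          intro x hx
          rcases mem_filter.mp hx with ⟨_, h1, h2⟩
          refine mem_erase.mpr ⟨?_, mem_filter.mpr ⟨mem_univ _, h1, lt_trans h2 hk0d⟩⟩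
          intro h; rw [h] at h2; exact lt_irrefl _ h2
        have := card_le_card hsub
        rw [card_erase_of_mem hk0mem] at this
        omega
      have hcard2 : ((univ : Finset ι).filter fun k => t < z k ∧ z k < d).card ≤ n := by
        have hsub : ((univ : Finset ι).filter fun k => t < z k ∧ z k < d) ⊆
            ((univ : Finset ι).filter fun k => c < z k ∧ z k < d).erase k0 := by
          intro x hx
          rcases mem_filter.mp hx with ⟨_, h1, h2⟩
          refine mem_erase.mpr ⟨?_, mem_filter.mpr ⟨mem_univ _, lt_trans hk0c h1, h2⟩⟩
          intro h; rw [h] at h1; exact lt_irrefl _ h1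
        have := card_le_card hsub
        rw [card_erase_of_mem hk0mem] at this
        omega
      have h1 := ih c t hct hcard1
      have h2 := ih t d htd hcard2
      have hsplit : ∑ A ∈ (Finset.univ : Finset (Finset ι)).filter (fun A => i ∈ A ∧ j ∈ A),
          mobius ν A * ((A \ {i, j}).fold min d z - (A \ {i, j}).fold min c z)
          = (∑ A ∈ (Finset.univ : Finset (Finset ι)).filter (fun A => i ∈ A ∧ j ∈ A),
              mobius ν A * ((A \ {i, j}).fold min d z - (A \ {i, j}).fold min t z))
            + ∑ A ∈ (Finset.univ : Finset (Finset ι)).filter (fun A => i ∈ A ∧ j ∈ A),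
              mobius ν A * ((A \ {i, j}).fold min t z - (A \ {i, j}).fold min c z) := by
        rw [← Finset.sum_add_distrib]
        apply Finset.sum_congr rfl
        intro A _
        ring
      rw [hsplit]
      linarith
    · apply mdn_base ν i j hcrit c d hcd z
      intro k hk
      by_contra h
      exact hex ⟨k, not_le.mp h, hk⟩

theorem convexity_criterion_implies_min_difference_nonneg
    {ι : Type*} [Fintype ι] [DecidableEq ι]
    (ν : Finset ι → ℝ) (h0 : ν ∅ = 0)
    (hmono : ∀ A B : Finset ι, A ⊆ B → ν A ≤ ν B)
    (i j : ι) (hij : i ≠ j)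
    (hcrit : ∀ A : Finset ι, i ∈ A → j ∈ A →
      0 ≤ ∑ B ∈ A.powerset.filter (fun B => i ∈ B ∧ j ∈ B), mobius ν B)
    (c d : ℝ) (hc : 0 ≤ c) (hcd : c ≤ d)
    (z : ι → ℝ) (hz : ∀ k, 0 ≤ z k) :
    0 ≤ ∑ A ∈ (Finset.univ : Finset (Finset ι)).filter (fun A => i ∈ A ∧ j ∈ A),
        mobius ν A *
          ((A \ {i, j}).fold min d z - (A \ {i, j}).fold min c z) := by
  exact mdn_aux ν i j hcrit z
    ((Finset.univ : Finset ι).filter fun k => c < z k ∧ z k < d).card c d hcd le_rfl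
end
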